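/- Let p₁, p₂ ∈ ℝ³, let n₁ ∈ ℝ³ with ‖n₁‖ = 1, set w₁₂ = (p₂ − p₁)·n₁ and the edge control points b₁₂ = (2p₁ + p₂ − w₁₂ n₁)/3, b₂₁ = (2p₂ + p₁ − ((p₁ − p₂)·n₂) n₂)/3 (for any n₂ ∈ ℝ³). Then the cubic Bézier boundary curve c(t) = (1−t)³ p₁ + 3(1−t)² t b₁₂ + 3(1−t) t² b₂₁ + t³ p₂ satisfies c′(0) · n₁ = 0; that is, the PN-triangle boundary curve leaves the corner p₁ tangentially to the plane through p₁ with unit normal n₁. -/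

import Mathlib

/-!
A cubic Bézier curve leaves its first control point in the direction `3 (b₁₂ - p₁)`. For a unit
normal `n₁`, `b₁₂ - p₁` is a third of the orthogonal projection of the edge `p₂ - p₁` onto the
plane `n₁⟂`, hence orthogonal to `n₁`.
-/

open RealInnerProductSpace

section CubicBezier

variable {E : Type*} [NormedAddCommGroup E] [NormedSpace ℝ E]

noncomputable def cubicBezier (P₀ P₁ P₂ P₃ : E) (t : ℝ) : E :=
  (1 - t) ^ 3 • P₀ + (3 * (1 - t) ^ 2 * t) • P₁ + (3 * (1 - t) * t ^ 2) • P₂ + t ^ 3 • P₃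

theorem hasDerivAt_cubicBezier_zero (P₀ P₁ P₂ P₃ : E) :
    HasDerivAt (cubicBezier P₀ P₁ P₂ P₃) ((3 : ℝ) • (P₁ - P₀)) 0 := by
  have hid : HasDerivAt (fun t : ℝ => t) 1 0 := hasDerivAt_id 0
  have h₀ : HasDerivAt (fun t : ℝ => (1 - t) ^ 3) (-3) 0 := by
    simpa using (hid.const_sub 1).fun_pow 3
  have h₁ : HasDerivAt (fun t : ℝ => 3 * (1 - t) ^ 2 * t) 3 0 := by
    simpa using (((hid.const_sub 1).fun_pow 2).const_mul 3).fun_mul hid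
  have h₂ : HasDerivAt (fun t : ℝ => 3 * (1 - t) * t ^ 2) 0 0 := by
    simpa using ((hid.const_sub 1).const_mul 3).fun_mul (hid.fun_pow 2)
  have h₃ : HasDerivAt (fun t : ℝ => t ^ 3) 0 0 := by
    simpa using hid.fun_pow 3
  refine ((((h₀.smul_const P₀).add (h₁.smul_const P₁)).add (h₂.smul_const P₂)).add
    (h₃.smul_const P₃)).congr_deriv ?_
  module

end CubicBezier

section PNTriangle

variable {E : Type*} [NormedAddCommGroup E] [InnerProductSpace ℝ E]

/-- The PN-triangle control point `bᵢⱼ` on the edge from `pᵢ` to `pⱼ`, for the normal `nᵢ` at `pᵢ`. -/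
noncomputable def pnEdgeControlPoint (pᵢ pⱼ nᵢ : E) : E :=
  (3 : ℝ)⁻¹ • ((2 : ℝ) • pᵢ + pⱼ - ⟪pⱼ - pᵢ, nᵢ⟫ • nᵢ)

theorem pnEdgeControlPoint_sub_self (pᵢ pⱼ nᵢ : E) :
    pnEdgeControlPoint pᵢ pⱼ nᵢ - pᵢ = (3 : ℝ)⁻¹ • (pⱼ - pᵢ - ⟪pⱼ - pᵢ, nᵢ⟫ • nᵢ) := by
  unfold pnEdgeControlPoint
  module

theorem inner_pnEdgeControlPoint_sub_self {pᵢ pⱼ nᵢ : E} (hnᵢ : ‖nᵢ‖ = 1) :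
    ⟪pnEdgeControlPoint pᵢ pⱼ nᵢ - pᵢ, nᵢ⟫ = 0 := by
  rw [pnEdgeControlPoint_sub_self, real_inner_smul_left, inner_sub_left, real_inner_smul_left,
    real_inner_self_eq_norm_sq, hnᵢ]
  ring

end PNTriangle

theorem pn_boundary_tangent_at_start_general
    (p₁ p₂ n₁ : EuclideanSpace ℝ (Fin 3))
    (hn₁ : ‖n₁‖ = 1)
    (b₁₂ b₂₁ : EuclideanSpace ℝ (Fin 3))
    (hb₁₂ : b₁₂ = (3 : ℝ)⁻¹ •
      ((2 : ℝ) • p₁ + p₂ - (inner ℝ (p₂ - p₁) n₁ : ℝ) • n₁))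
    (c : ℝ → EuclideanSpace ℝ (Fin 3))
    (hc : ∀ t : ℝ, c t = (1 - t) ^ 3 • p₁ + (3 * (1 - t) ^ 2 * t) • b₁₂ +
      (3 * (1 - t) * t ^ 2) • b₂₁ + t ^ 3 • p₂) :
    (inner ℝ (deriv c 0) n₁ : ℝ) = 0 := by
  have hc_bezier : c = cubicBezier p₁ b₁₂ b₂₁ p₂ := funext hc
  have hb₁₂_pn : b₁₂ = pnEdgeControlPoint p₁ p₂ n₁ := hb₁₂
  rw [hc_bezier, (hasDerivAt_cubicBezier_zero p₁ b₁₂ b₂₁ p₂).deriv, real_inner_smul_left,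
    hb₁₂_pn, inner_pnEdgeControlPoint_sub_self hn₁, mul_zero]

/-- The PN-triangle cubic Bézier boundary curve leaves the corner `p₁` tangentially
to the plane through `p₁` with unit normal `n₁`: `c′(0) ⬝ n₁ = 0`. -/
theorem pn_boundary_tangent_at_start
    (p₁ p₂ n₁ n₂ : EuclideanSpace ℝ (Fin 3))
    (hn₁ : ‖n₁‖ = 1)
    (b₁₂ b₂₁ : EuclideanSpace ℝ (Fin 3))
    (hb₁₂ : b₁₂ = (3 : ℝ)⁻¹ •
      ((2 : ℝ) • p₁ + p₂ - (inner ℝ (p₂ - p₁) n₁ : ℝ) • n₁))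
    (hb₂₁ : b₂₁ = (3 : ℝ)⁻¹ •
      ((2 : ℝ) • p₂ + p₁ - (inner ℝ (p₁ - p₂) n₂ : ℝ) • n₂))
    (c : ℝ → EuclideanSpace ℝ (Fin 3))
    (hc : ∀ t : ℝ, c t = (1 - t) ^ 3 • p₁ + (3 * (1 - t) ^ 2 * t) • b₁₂ +
      (3 * (1 - t) * t ^ 2) • b₂₁ + t ^ 3 • p₂) :
    (inner ℝ (deriv c 0) n₁ : ℝ) = 0 :=
  pn_boundary_tangent_at_start_general p₁ p₂ n₁ hn₁ b₁₂ b₂₁ hb₁₂ c hc
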